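/- Let x be a string of length n with nearest neighbor representation NN(x), and let y be a string of length n. Then Nat(x) = Nat(y) if and only if for every i with 1 ≤ i ≤ n: y[LMax_x[i]] ≤ y[i] ≤ y[LMin_x[i]] (with the conventions y[−∞] = −∞, y[∞] = +∞), where additionally equality y[i] = y[LMax_x[i]] holds exactly when x[i] = x[LMax_x[i]], and similarly for LMin. -/
import Mathlib


open Finset

/-- `Nat(x)[i] = 1 + |{j : x[j] < x[i]}|`. -/
def natRank {n : ℕ} {α : Type*} [LinearOrder α] (x : Fin n → α) (i : Fin n) : ℕ :=
  1 + (univ.filter (fun j => x j < x i)).card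

/-- `j = LMax_x[i]`: `j` is the rightmost index `j < i` with
`x[j] = max{x[k] : k < i, x[k] ≤ x[i]}`. -/
def IsLMax {n : ℕ} {α : Type*} [LinearOrder α] (x : Fin n → α) (i j : Fin n) : Prop :=
  j < i ∧ x j ≤ x i ∧ (∀ k, k < i → x k ≤ x i → x k ≤ x j) ∧
    (∀ k, j < k → k < i → x k ≤ x i → x k < x j)

/-- `j = LMin_x[i]`: `j` is the rightmost index `j < i` with
`x[j] = min{x[k] : k < i, x[k] ≥ x[i]}`. -/
def IsLMin {n : ℕ} {α : Type*} [LinearOrder α] (x : Fin n → α) (i j : Fin n) : Prop :=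
  j < i ∧ x i ≤ x j ∧ (∀ k, k < i → x i ≤ x k → x j ≤ x k) ∧
    (∀ k, j < k → k < i → x i ≤ x k → x j < x k)

lemma natRank_lt_iff {n : ℕ} {α : Type*} [LinearOrder α] (x : Fin n → α) (i j : Fin n) :
    natRank x i < natRank x j ↔ x i < x j := by
  constructor
  · intro h
    by_contra hc
    push_neg at hc
    have hsub : (univ.filter (fun k => x k < x j)) ⊆ (univ.filter (fun k => x k < x i)) := by
      intro k hk
      simp only [mem_filter, mem_univ, true_and] at *
      exact lt_of_lt_of_le hk hc
    have := Finset.card_le_card hsub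
    unfold natRank at h
    omega
  · intro h
    have hsub : (univ.filter (fun k => x k < x i)) ⊂ (univ.filter (fun k => x k < x j)) := by
      constructor
      · intro k hk
        simp only [mem_filter, mem_univ, true_and] at *
        exact lt_trans hk h
      · intro hc
        have := hc (by simp [h] : i ∈ univ.filter (fun k => x k < x j))
        simp at this
    have := Finset.card_lt_card hsub
    unfold natRank
    omega

lemma lt_flip {α β : Type*} [LinearOrder α] [LinearOrder β] {a b : α} {c d : β}
    (h1 : a < b ↔ c < d) (h2 : a = b ↔ c = d) : b < a ↔ d < c := by
  constructor
  · intro h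
    rcases lt_trichotomy c d with hc | hc | hc
    · exact absurd (h1.mpr hc) (lt_asymm h)
    · exact absurd (h2.mpr hc) (ne_of_gt h)
    · exact hc
  · intro h
    rcases lt_trichotomy a b with ha | ha | ha
    · exact absurd (h1.mp ha) (lt_asymm h)
    · exact absurd (h2.mp ha) (ne_of_gt h)
    · exact ha

lemma eq_flip {α β : Type*} [LinearOrder α] [LinearOrder β] {a b : α} {c d : β}
    (h1 : a < b ↔ c < d) (h2 : b < a ↔ d < c) : a = b ↔ c = d := by
  constructor
  · intro h
    by_contra hne
    rcases lt_or_gt_of_ne hne with hc | hc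
    · exact absurd (h1.mpr hc) (by rw [h]; exact lt_irrefl b)
    · exact absurd (h2.mpr hc) (by rw [h]; exact lt_irrefl b)
  · intro h
    by_contra hne
    rcases lt_or_gt_of_ne hne with ha | ha
    · exact absurd (h1.mp ha) (by rw [h]; exact lt_irrefl d)
    · exact absurd (h2.mp ha) (by rw [h]; exact lt_irrefl d)

lemma exists_lmax {n : ℕ} {α : Type*} [LinearOrder α] (x : Fin n → α) (i k : Fin n)
    (hk : k < i) (hx : x k ≤ x i) : ∃ j, IsLMax x i j := by
  classical
  set S := univ.filter (fun k => k < i ∧ x k ≤ x i) with hS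
  have hne : S.Nonempty := ⟨k, by simp [hS, hk, hx]⟩
  obtain ⟨j, hjS, hjmax⟩ := S.exists_max_image (fun k => toLex (x k, k)) hne
  simp only [hS, mem_filter, mem_univ, true_and] at hjS
  have key : ∀ a, a < i → x a ≤ x i → x a < x j ∨ (x a = x j ∧ a ≤ j) := by
    intro a ha hxa
    have := hjmax a (by simp [hS, ha, hxa])
    rw [Prod.Lex.le_iff] at this
    exact this
  refine ⟨j, hjS.1, hjS.2, ?_, ?_⟩
  · intro a ha hxa
    rcases key a ha hxa with h | h
    · exact le_of_lt h
    · exact le_of_eq h.1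
  · intro a hja ha hxa
    rcases key a ha hxa with h | h
    · exact h
    · exact absurd h.2 (not_le_of_gt hja)

lemma exists_lmin {n : ℕ} {α : Type*} [LinearOrder α] (x : Fin n → α) (i k : Fin n)
    (hk : k < i) (hx : x i ≤ x k) : ∃ j, IsLMin x i j := by
  obtain ⟨j, hj⟩ := exists_lmax (α := αᵒᵈ) (fun a => OrderDual.toDual (x a)) i k hk hx
  exact ⟨j, hj⟩

/-- Verification via the nearest neighbor representation: `Nat(x) = Nat(y)` iff for
every `i`, `y[LMax_x[i]] ≤ y[i] ≤ y[LMin_x[i]]` with the equalities holding exactly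
when the corresponding equalities hold in `x` (the `−∞`/`∞` conventions correspond to
the cases where no `LMax`/`LMin` exists, for which the condition is vacuous). -/
theorem stmt9 {n : ℕ} {α β : Type*} [LinearOrder α] [LinearOrder β]
    (x : Fin n → α) (y : Fin n → β) :
    (∀ i, natRank x i = natRank y i) ↔
      (∀ i, (∀ j, IsLMax x i j → y j ≤ y i ∧ (y i = y j ↔ x i = x j)) ∧
            (∀ j, IsLMin x i j → y i ≤ y j ∧ (y i = y j ↔ x i = x j))) := by
  constructor
  · intro h i
    have P : ∀ a b : Fin n, x a < x b ↔ y a < y b := by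
      intro a b
      rw [← natRank_lt_iff x, h a, h b, natRank_lt_iff]
    have E : ∀ a b : Fin n, x a = x b ↔ y a = y b := fun a b =>
      eq_flip (P a b) (P b a)
    constructor
    · intro j hj
      refine ⟨?_, (E i j).symm⟩
      have : ¬ x i < x j := not_lt_of_ge hj.2.1
      rw [P i j] at this
      exact le_of_not_gt this
    · intro j hj
      refine ⟨?_, (E i j).symm⟩
      have : ¬ x j < x i := not_lt_of_ge hj.2.1
      rw [P j i] at this
      exact le_of_not_gt this
  · intro H
    -- main claim by strong induction
    have Q : ∀ m : ℕ, ∀ i k : Fin n, i.val = m → k < i →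
        ((x k < x i ↔ y k < y i) ∧ (x k = x i ↔ y k = y i)) := by
      intro m
      induction m using Nat.strong_induction_on with
      | _ m IH =>
        intro i k him hk
        have IHpair : ∀ u v : Fin n, u < i → v < i →
            ((x u < x v ↔ y u < y v) ∧ (x u = x v ↔ y u = y v)) := by
          intro u v hu hv
          rcases lt_trichotomy u v with h | h | h
          · exact IH v.val (by omega) v u rfl h
          · subst h; simp
          · obtain ⟨h1, h2⟩ := IH u.val (by omega) u v rfl h
            refine ⟨lt_flip h1 h2, ?_⟩
            rw [eq_comm, h2, eq_comm]
        rcases le_total (x k) (x i) with hkx | hkx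
        · obtain ⟨j, hj⟩ := exists_lmax x i k hk hkx
          obtain ⟨hy1, hy2⟩ := (H i).1 j hj
          have hkj : x k ≤ x j := hj.2.2.1 k hk hkx
          rcases eq_or_lt_of_le hkj with heq | hlt
          · have hyk : y k = y j := (IHpair k j hk hj.1).2.mp heq
            constructor
            · rw [heq, hyk]
              constructor
              · intro h
                rcases lt_or_eq_of_le hy1 with h' | h'
                · exact h'
                · exact absurd (hy2.mp h'.symm).symm (ne_of_lt h)
              · intro h
                rcases lt_or_eq_of_le hj.2.1 with h' | h'
                · exact h'
                · exact absurd (hy2.mpr h'.symm).symm (ne_of_lt h)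
            · rw [heq, hyk, eq_comm, ← hy2]
              exact eq_comm
          · have hylt : y k < y j := (IHpair k j hk hj.1).1.mp hlt
            have h1 : x k < x i := lt_of_lt_of_le hlt hj.2.1
            have h2 : y k < y i := lt_of_lt_of_le hylt hy1
            simp [h1, h2, ne_of_lt h1, ne_of_lt h2]
        · obtain ⟨j, hj⟩ := exists_lmin x i k hk hkx
          obtain ⟨hy1, hy2⟩ := (H i).2 j hj
          have hkj : x j ≤ x k := hj.2.2.1 k hk hkx
          rcases eq_or_lt_of_le hkj with heq | hlt
          · have hyk : y j = y k := (IHpair j k hj.1 hk).2.mp heq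
            constructor
            · rw [← heq, ← hyk]
              exact iff_of_false (not_lt_of_ge hj.2.1) (not_lt_of_ge hy1)
            · rw [← heq, ← hyk, eq_comm, ← hy2]
              exact eq_comm
          · have hylt : y j < y k := (IHpair j k hj.1 hk).1.mp hlt
            have h1 : x i < x k := lt_of_le_of_lt hj.2.1 hlt
            have h2 : y i < y k := lt_of_le_of_lt hy1 hylt
            simp [not_lt_of_gt h1, not_lt_of_gt h2, ne_of_gt h1, ne_of_gt h2]
    have P : ∀ a b : Fin n, x a < x b ↔ y a < y b := by
      intro a b
      rcases lt_trichotomy a b with h | h | h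
      · exact (Q b.val b a rfl h).1
      · subst h; simp
      · obtain ⟨h1, h2⟩ := Q a.val a b rfl h
        exact lt_flip h1 h2
    intro i
    unfold natRank
    congr 1
    apply Finset.card_bij (fun a _ => a)
    · intro a ha
      simp only [mem_filter, mem_univ, true_and] at *
      exact (P a i).mp ha
    · intro a b _ _ h; exact h
    · intro b hb
      simp only [mem_filter, mem_univ, true_and] at hb
      exact ⟨b, by simp [(P b i).mpr hb]⟩
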